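/- Let f ∈ L¹(ℝ) with ∫ f = 1, f ≥ 0. Then for every interval [a,b] ⊆ [0,1], ∫_{x : {nx} ∈ [a,b]} f(x) dx → b − a as n → ∞. -/

import Mathlib

/-!
On each interval `[k/n, (k+1)/n)` the set `{x | Int.fract (n * x) ∈ s}` occupies the fraction
`|s ∩ [0,1)|`, so for the step function `x ↦ g (⌊n x⌋ / n)` the integral over that set is exactly
`|s ∩ [0,1)|` times the full integral. A continuous compactly supported `g` is the `L¹` limit of
these step functions, and such `g` are dense in `L¹`.
-/

open MeasureTheory Filter Topology Set Metric

theorem norm_setIntegral_sub_setIntegral_le {α : Type*} [MeasurableSpace α] {μ : Measure α}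
    {f g : α → ℝ} (hf : Integrable f μ) (hg : Integrable g μ) (s : Set α) :
    ‖∫ x in s, f x ∂μ - ∫ x in s, g x ∂μ‖ ≤ ∫ x, ‖f x - g x‖ ∂μ := by
  rw [← integral_sub hf.integrableOn hg.integrableOn]
  exact (norm_integral_le_integral_norm _).trans
    (setIntegral_le_integral (hf.sub hg).norm (Eventually.of_forall fun _ => norm_nonneg _))

theorem tendsto_setIntegral_of_continuous_hasCompactSupport {α ι : Type*} [TopologicalSpace α]
    [NormalSpace α] [R1Space α] [WeaklyLocallyCompactSpace α] [MeasurableSpace α] [BorelSpace α]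
    {μ : Measure α} [μ.Regular] {l : Filter ι} {s : ι → Set α} {c : ℝ}
    (h : ∀ g : α → ℝ, Continuous g → HasCompactSupport g →
      Tendsto (fun i => ∫ x in s i, g x ∂μ) l (𝓝 (c * ∫ x, g x ∂μ)))
    {f : α → ℝ} (hf : Integrable f μ) :
    Tendsto (fun i => ∫ x in s i, f x ∂μ) l (𝓝 (c * ∫ x, f x ∂μ)) := by
  rw [Metric.tendsto_nhds]
  intro ε hε
  set δ := ε / (2 * (‖c‖ + 1))
  have hδ : 0 < δ := by positivity
  have hδε : (1 + ‖c‖) * δ = ε / 2 := by simp only [δ]; field_simp; ring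
  obtain ⟨g, hgs, hfg, hgc, hgi⟩ := hf.exists_hasCompactSupport_integral_sub_le hδ
  have hc : ‖c * ∫ x, g x ∂μ - c * ∫ x, f x ∂μ‖ ≤ ‖c‖ * δ := by
    rw [← mul_sub, norm_mul, ← integral_sub hgi hf]
    gcongr
    refine (norm_integral_le_integral_norm _).trans (le_of_eq_of_le ?_ hfg)
    simp only [norm_sub_rev]
  filter_upwards [Metric.tendsto_nhds.1 (h g hgc hgs) (ε / 2) (half_pos hε)] with i hi
  rw [dist_eq_norm] at hi ⊢
  have hfg_i := (norm_setIntegral_sub_setIntegral_le hf hgi (s i)).trans hfg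
  linarith [norm_sub_le_norm_sub_add_norm_sub (∫ x in s i, f x ∂μ) (∫ x in s i, g x ∂μ)
      (c * ∫ x, f x ∂μ),
    norm_sub_le_norm_sub_add_norm_sub (∫ x in s i, g x ∂μ) (c * ∫ x, g x ∂μ) (c * ∫ x, f x ∂μ)]

theorem HasCompactSupport.exists_integrable_bound_of_dist_le {α E : Type*} [PseudoMetricSpace α]
    [ProperSpace α] [MeasurableSpace α] [OpensMeasurableSpace α] {μ : Measure α}
    [IsFiniteMeasureOnCompacts μ] [NormedAddCommGroup E] {g : α → E} (hgc : Continuous g)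
    (hgs : HasCompactSupport g) (r : ℝ) :
    ∃ G : α → ℝ, Integrable G μ ∧ ∀ x y, dist x y ≤ r → ‖g y‖ ≤ G x := by
  obtain ⟨C, hC⟩ := hgc.bounded_above_of_compact_support hgs
  refine ⟨(cthickening r (tsupport g)).indicator fun _ => C,
    (integrableOn_const (hgs.isCompact.cthickening.measure_lt_top.ne)).integrable_indicator
      isClosed_cthickening.measurableSet, fun x y hxy => ?_⟩
  by_cases hy : y ∈ tsupport g
  · rw [indicator_of_mem (mem_cthickening_of_dist_le x y r _ hy hxy)]
    exact hC y
  · rw [image_eq_zero_of_notMem_tsupport hy, norm_zero]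
    exact indicator_nonneg (fun _ _ => (norm_nonneg _).trans (hC y)) x

theorem hasSum_integral_floor_mul_fract {H : ℤ → ℝ} {φ : ℝ → ℝ}
    (hi : Integrable (fun y => H ⌊y⌋ * φ (Int.fract y))) :
    HasSum (fun k => H k * ∫ t in Ico (0 : ℝ) 1, φ t) (∫ y, H ⌊y⌋ * φ (Int.fract y)) := by
  have h := hasSum_integral_iUnion (fun k : ℤ => measurableSet_Ico)
    (pairwise_disjoint_Ico_intCast ℝ) (by rw [iUnion_Ico_intCast ℝ]; exact hi.integrableOn)
  rw [iUnion_Ico_intCast ℝ, Measure.restrict_univ] at h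
  refine h.congr_fun fun k => ?_
  have htranslate : ∫ y in Ico (k : ℝ) (k + 1), H ⌊y⌋ * φ (Int.fract y)
      = ∫ t in Ico (0 : ℝ) 1, H ⌊t + k⌋ * φ (Int.fract (t + k)) := by
    rw [← (measurePreserving_add_right volume (k : ℝ)).setIntegral_preimage_emb
      (measurableEmbedding_addRight _)]
    simp
  rw [htranslate, ← integral_const_mul]
  refine setIntegral_congr_fun measurableSet_Ico fun t ht => ?_
  rw [Int.fract_add_intCast, Int.floor_add_intCast, Int.floor_eq_zero_iff.2 ht,
    Int.fract_eq_self.2 ht, zero_add]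

theorem setIntegral_fract_mem_comp_floor (n : ℝ) {s : Set ℝ} (hs : MeasurableSet s) {H : ℤ → ℝ}
    (hi : Integrable (fun y : ℝ => H ⌊y⌋)) :
    ∫ x in {x | Int.fract (n * x) ∈ s}, H ⌊n * x⌋ = volume.real (s ∩ Ico 0 1) * ∫ x, H ⌊n * x⌋ := by
  set φ : ℝ → ℝ := s.indicator 1
  have hφ : Measurable φ := measurable_one.indicator hs
  have hφ_le : ∀ t, ‖φ t‖ ≤ 1 := fun t => (norm_indicator_le_norm_self 1 t).trans_eq norm_one
  have hS : MeasurableSet {x : ℝ | Int.fract (n * x) ∈ s} :=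
    hs.preimage (measurable_fract.comp (measurable_const_mul n))
  have hsum := hasSum_integral_floor_mul_fract (hi.mul_bdd
    (hφ.comp measurable_fract).aestronglyMeasurable (Eventually.of_forall fun y => hφ_le _))
  have hsum₁ := hasSum_integral_floor_mul_fract (φ := 1) (by simpa using hi)
  rw [integral_indicator_one hs, measureReal_restrict_apply hs] at hsum
  simp only [Pi.one_apply, mul_one, setIntegral_const, smul_eq_mul,
    Real.volume_real_Ico_of_le zero_le_one, sub_zero] at hsum₁
  calc ∫ x in {x | Int.fract (n * x) ∈ s}, H ⌊n * x⌋
      = ∫ x, H ⌊n * x⌋ * φ (Int.fract (n * x)) := by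
        rw [← integral_indicator hS]
        congr 1 with x
        by_cases hx : Int.fract (n * x) ∈ s <;> simp [φ, hx]
    _ = |n⁻¹| * (volume.real (s ∩ Ico 0 1) * ∫ y, H ⌊y⌋) := by
        rw [Measure.integral_comp_mul_left (fun y => H ⌊y⌋ * φ (Int.fract y)), smul_eq_mul,
          hsum.unique (hsum₁.mul_right _), mul_comm (∫ y, H ⌊y⌋)]
    _ = volume.real (s ∩ Ico 0 1) * ∫ x, H ⌊n * x⌋ := by
        rw [Measure.integral_comp_mul_left (fun y => H ⌊y⌋), smul_eq_mul]; ring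

theorem dist_floor_mul_div_le {n : ℝ} (hn : 0 < n) (x : ℝ) : dist x (⌊n * x⌋ / n) ≤ 1 / n := by
  have hfract : x - ⌊n * x⌋ / n = Int.fract (n * x) / n := by
    rw [Int.fract, sub_div, mul_div_cancel_left₀ _ hn.ne']
  rw [Real.dist_eq, hfract, abs_of_nonneg (div_nonneg (Int.fract_nonneg _) hn.le)]
  gcongr
  exact (Int.fract_lt_one _).le

theorem dist_floor_mul_div_le_one {n : ℝ} (hn : 1 ≤ n) (x : ℝ) : dist x (⌊n * x⌋ / n) ≤ 1 :=
  (dist_floor_mul_div_le (by linarith) x).trans (div_le_one_of_le₀ hn (by linarith))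

theorem tendsto_floor_mul_div (x : ℝ) : Tendsto (fun n : ℕ => (⌊n * x⌋ : ℝ) / n) atTop (𝓝 x) := by
  rw [tendsto_iff_dist_tendsto_zero]
  refine squeeze_zero' (Eventually.of_forall fun n => dist_nonneg) ?_
    tendsto_one_div_atTop_nhds_zero_nat
  filter_upwards [eventually_gt_atTop 0] with n hn
  rw [dist_comm]
  exact dist_floor_mul_div_le (Nat.cast_pos.2 hn) x

section StepApproximation

variable {g : ℝ → ℝ}

theorem Continuous.measurable_comp_floor_mul_div (hgc : Continuous g) (n : ℝ) :
    Measurable fun x => g (⌊n * x⌋ / n) :=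
  hgc.measurable.comp ((measurable_from_top.comp (Int.measurable_floor.comp
    (measurable_const_mul n))).div_const n)

theorem integrable_comp_floor_mul_div (hgc : Continuous g) (hgs : HasCompactSupport g) {n : ℝ}
    (hn : 1 ≤ n) : Integrable fun x => g (⌊n * x⌋ / n) := by
  obtain ⟨G, hG, hgG⟩ := hgs.exists_integrable_bound_of_dist_le (μ := volume) hgc 1
  exact hG.mono' (hgc.measurable_comp_floor_mul_div n).aestronglyMeasurable
    (Eventually.of_forall fun x => hgG _ _ (dist_floor_mul_div_le_one hn x))

theorem tendsto_integral_norm_comp_floor_mul_div_sub (hgc : Continuous g)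
    (hgs : HasCompactSupport g) :
    Tendsto (fun n : ℕ => ∫ x : ℝ, ‖g (⌊n * x⌋ / n) - g x‖) atTop (𝓝 0) := by
  obtain ⟨G, hG, hgG⟩ := hgs.exists_integrable_bound_of_dist_le (μ := volume) hgc 1
  have hlim := tendsto_integral_filter_of_dominated_convergence (fun x => 2 * G x)
    (l := atTop) (F := fun (n : ℕ) (x : ℝ) => ‖g (⌊n * x⌋ / n) - g x‖) (f := fun _ => 0)
    (Eventually.of_forall fun n =>
      ((hgc.measurable_comp_floor_mul_div n).sub hgc.measurable).norm.aestronglyMeasurable)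
    ?_ (hG.const_mul 2) ?_
  · simpa using hlim
  · filter_upwards [eventually_ge_atTop 1] with n hn
    refine Eventually.of_forall fun x => ?_
    rw [norm_norm, two_mul]
    exact (norm_sub_le _ _).trans (add_le_add
      (hgG _ _ (dist_floor_mul_div_le_one (by exact_mod_cast hn) x)) (hgG _ _ (by simp)))
  · refine Eventually.of_forall fun x => ?_
    simpa using ((hgc.tendsto x).comp (tendsto_floor_mul_div x)).sub_const (g x) |>.norm

theorem tendsto_setIntegral_fract_mem (hgc : Continuous g) (hgs : HasCompactSupport g)
    {s : Set ℝ} (hs : MeasurableSet s) :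
    Tendsto (fun n : ℕ => ∫ x in {x : ℝ | Int.fract (n * x) ∈ s}, g x) atTop
      (𝓝 (volume.real (s ∩ Ico 0 1) * ∫ x, g x)) := by
  set c := volume.real (s ∩ Ico 0 1)
  have hg : Integrable g := hgc.integrable_of_hasCompactSupport hgs
  have herr := (tendsto_integral_norm_comp_floor_mul_div_sub hgc hgs).const_mul (1 + ‖c‖)
  rw [mul_zero] at herr
  rw [tendsto_iff_norm_sub_tendsto_zero]
  refine squeeze_zero' (Eventually.of_forall fun _ => norm_nonneg _) ?_ herr
  filter_upwards [eventually_ge_atTop 1] with n hn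
  have hn₁ : (1 : ℝ) ≤ n := by exact_mod_cast hn
  have hn₀ : (n : ℝ) ≠ 0 := by positivity
  have hgn := integrable_comp_floor_mul_div hgc hgs hn₁
  have hstep := setIntegral_fract_mem_comp_floor n hs
    (H := fun k => g (k / n)) (by simpa [hn₀] using hgn.comp_mul_left' (inv_ne_zero hn₀))
  have hS := norm_setIntegral_sub_setIntegral_le hgn hg {x : ℝ | Int.fract (n * x) ∈ s}
  have hR : ‖(∫ x : ℝ, g (⌊n * x⌋ / n)) - ∫ x, g x‖ ≤ ∫ x : ℝ, ‖g (⌊n * x⌋ / n) - g x‖ := by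
    simpa using norm_setIntegral_sub_setIntegral_le hgn hg univ
  calc ‖(∫ x in {x : ℝ | Int.fract (n * x) ∈ s}, g x) - c * ∫ x, g x‖
      = ‖((∫ x in {x : ℝ | Int.fract (n * x) ∈ s}, g x)
          - ∫ x in {x : ℝ | Int.fract (n * x) ∈ s}, g (⌊n * x⌋ / n))
          + c * ((∫ x : ℝ, g (⌊n * x⌋ / n)) - ∫ x, g x)‖ := by
        rw [hstep]; congr 1; ring
    _ ≤ (1 + ‖c‖) * ∫ x : ℝ, ‖g (⌊n * x⌋ / n) - g x‖ := by
        refine (norm_add_le _ _).trans ?_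
        rw [norm_sub_rev (∫ x in _, g x), norm_mul, add_mul, one_mul]
        gcongr

end StepApproximation

theorem density_fract_interval_tendsto_general
    (f : ℝ → ℝ) (hf1 : ∫ x, f x = 1) (hfi : Integrable f volume)
    (a b : ℝ) (ha : 0 ≤ a) (hab : a ≤ b) (hb : b ≤ 1) :
    Tendsto
      (fun n : ℕ => ∫ x in {x : ℝ | Int.fract ((n : ℝ) * x) ∈ Set.Icc a b}, f x)
      atTop (nhds (b - a)) := by
  have hab_frac : volume.real (Icc a b ∩ Ico 0 1) = b - a := by
    rw [measureReal_congr (EventuallyEq.rfl.inter Ico_ae_eq_Icc),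
      inter_eq_left.2 (Icc_subset_Icc ha hb), Real.volume_real_Icc_of_le hab]
  have h := tendsto_setIntegral_of_continuous_hasCompactSupport
    (s := fun n : ℕ => {x : ℝ | Int.fract ((n : ℝ) * x) ∈ Icc a b})
    (fun g hgc hgs => tendsto_setIntegral_fract_mem hgc hgs measurableSet_Icc) hfi
  rwa [hf1, mul_one, hab_frac] at h

/-- Measure-theoretic core of the arbitrary functions principle: for a probability
density `f` on `ℝ` and `[a,b] ⊆ [0,1]`, `∫_{ {nx} ∈ [a,b] } f(x) dx → b − a`. -/
theorem density_fract_interval_tendsto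
    (f : ℝ → ℝ) (hfm : Measurable f) (hf0 : ∀ x, 0 ≤ f x)
    (hf1 : ∫ x, f x = 1) (hfi : Integrable f volume)
    (a b : ℝ) (ha : 0 ≤ a) (hab : a ≤ b) (hb : b ≤ 1) :
    Tendsto
      (fun n : ℕ => ∫ x in {x : ℝ | Int.fract ((n : ℝ) * x) ∈ Set.Icc a b}, f x)
      atTop (nhds (b - a)) :=
  density_fract_interval_tendsto_general f hf1 hfi a b ha hab hb
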